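/- arXiv:math/0611062 — 14 statements merged into one kernel-verified Lean document; each statement's English description precedes it below -/
import Mathlib

section
/- Let A = {(x,0) : x ≥ 0} and B = {(x,0) : x > 0} be subsets of the Euclidean plane ℝ². Then A ≤ B and B ≤ A, but there is no surjective isometry f : ℝ² → ℝ² with f(A) = B, i.e. A is not geometrically equal to B. -/
open Set Function

abbrev Plane := EuclideanSpace ℝ (Fin 2)

/-- Geometric equality: some surjective isometry of the plane maps `S₁` onto `S₂`. -/
def GeomEq (S₁ S₂ : Set Plane) : Prop :=
  ∃ f : Plane → Plane, Isometry f ∧ Function.Surjective f ∧ f '' S₁ = S₂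

/-- `S₁` is equal to or smaller than `S₂`: some surjective isometry maps `S₁` into `S₂`. -/
def GeomLe (S₁ S₂ : Set Plane) : Prop :=
  ∃ f : Plane → Plane, Isometry f ∧ Function.Surjective f ∧ f '' S₁ ⊆ S₂

/-- A figure is good if `A ≤ B` and `B ≤ A` imply `A ≈ B` for every figure `B`. -/
def IsGood (A : Set Plane) : Prop :=
  ∀ B : Set Plane, GeomLe A B → GeomLe B A → GeomEq A B

/-- A figure is strongly good if every surjective isometry mapping it into itself maps it onto itself. -/
def IsStronglyGood (A : Set Plane) : Prop :=
  ∀ f : Plane → Plane, Isometry f → Function.Surjective f → f '' A ⊆ A → f '' A = A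

/-- Example 1.1: the closed and open half-lines satisfy `A ≤ B` and `B ≤ A`
but are not geometrically equal. -/
theorem halfLine_counterexample :
    let A : Set Plane := {p | 0 ≤ p 0 ∧ p 1 = 0}
    let B : Set Plane := {p | 0 < p 0 ∧ p 1 = 0}
    GeomLe A B ∧ GeomLe B A ∧ ¬ GeomEq A B := by
  intro A B
  have hAclosed : IsClosed A := by
    have : A = (fun p : Plane => p 0) ⁻¹' Ici 0 ∩ (fun p : Plane => p 1) ⁻¹' {0} := by
      ext p; exact Iff.rfl
    rw [this]
    exact ((isClosed_Ici.preimage (PiLp.continuous_apply 2 _ 0)).inter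
      (isClosed_singleton.preimage (PiLp.continuous_apply 2 _ 1)))
  refine ⟨?_, ?_, ?_⟩
  · -- translate by (1,0)
    set v : Plane := EuclideanSpace.single 0 (1 : ℝ) with hv
    refine ⟨(IsometryEquiv.addRight v : Plane ≃ᵢ Plane), IsometryEquiv.isometry _,
      (IsometryEquiv.addRight v).surjective, ?_⟩
    rintro q ⟨p, ⟨hp0, hp1⟩, rfl⟩
    constructor
    · show (0:ℝ) < (p + v) 0
      have : (p + v) 0 = p 0 + 1 := by simp [hv, EuclideanSpace.single_apply]
      rw [this]; linarith
    · show (p + v) 1 = 0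
      have : (p + v) 1 = p 1 + 0 := by simp [hv, EuclideanSpace.single_apply]
      rw [this, hp1]; ring
  · refine ⟨id, isometry_id, surjective_id, ?_⟩
    rintro q ⟨p, ⟨hp0, hp1⟩, rfl⟩
    exact ⟨le_of_lt hp0, hp1⟩
  · rintro ⟨f, hf, hsurj, himg⟩
    have hBclosed : IsClosed B := by
      rw [← himg]
      exact (hf.isClosedEmbedding.isClosedMap) A hAclosed
    -- but B is not closed: 0 is in its closure
    have htend : Filter.Tendsto (fun n : ℕ => (EuclideanSpace.single 0 ((1:ℝ)/(n+1)) : Plane))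
        Filter.atTop (nhds 0) := by
      rw [tendsto_iff_norm_sub_tendsto_zero]
      refine tendsto_one_div_add_atTop_nhds_zero_nat.congr fun n => ?_
      rw [sub_zero, EuclideanSpace.norm_single, Real.norm_eq_abs,
        abs_of_pos (by positivity)]
    have hmem : (0 : Plane) ∈ B := by
      refine hBclosed.mem_of_tendsto htend (Filter.Eventually.of_forall fun n => ?_)
      constructor
      · show (0:ℝ) < EuclideanSpace.single 0 ((1:ℝ)/(n+1)) 0
        simp [EuclideanSpace.single_apply]; positivity
      · show EuclideanSpace.single 0 ((1:ℝ)/(n+1)) 1 = 0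
        simp [EuclideanSpace.single_apply]
    exact lt_irrefl 0 hmem.1
end

section
/- Let A = {(x,y) ∈ ℝ² : x ≤ 0} ∪ {(x,2) : 0 ≤ x ≤ 1} and let B = {(x,y) ∈ ℝ² : x ≤ 2}. Then A ≤ B and B ≤ A, but there is no surjective isometry f : ℝ² → ℝ² with f(A) = B, i.e. A is not geometrically equal to B. -/
open Set Function

lemma contProj : Continuous (fun p : Plane => p 0) := (continuous_apply 0).comp (PiLp.continuous_ofLp 2 _)

lemma closedHalf (a : ℝ) : IsClosed {p : Plane | p 0 ≤ a} :=
  isClosed_le contProj continuous_const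

lemma interior_A_subset :
    interior ({p : Plane | p 0 ≤ 0} ∪ {p | 0 ≤ p 0 ∧ p 0 ≤ 1 ∧ p 1 = 2}) ⊆
      {p : Plane | p 0 ≤ 0} := by
  intro p hp
  by_contra hp0
  have hp0' : 0 < p 0 := by
    simp only [mem_setOf_eq, not_le] at hp0; exact hp0
  rw [mem_interior_iff_mem_nhds, Metric.mem_nhds_iff] at hp
  obtain ⟨ε, hε, hball⟩ := hp
  have hpA : p ∈ ({p : Plane | p 0 ≤ 0} ∪ {p | 0 ≤ p 0 ∧ p 0 ≤ 1 ∧ p 1 = 2}) :=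
    hball (Metric.mem_ball_self hε)
  have hp1 : p 1 = 2 := by
    rcases hpA with h | h
    · exact absurd (show p 0 ≤ 0 from h) (not_le.mpr hp0')
    · exact h.2.2
  set q : Plane := p + (EuclideanSpace.single 1 (ε/2) : Plane) with hq
  have hq0 : q 0 = p 0 := by simp [hq, EuclideanSpace.single_apply]
  have hq1 : q 1 = p 1 + ε/2 := by simp [hq, EuclideanSpace.single_apply]
  have hdist : dist q p = ε/2 := by
    simp [hq, dist_add_left, abs_of_pos hε]
  have hqA : q ∈ ({p : Plane | p 0 ≤ 0} ∪ {p | 0 ≤ p 0 ∧ p 0 ≤ 1 ∧ p 1 = 2}) := by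
    apply hball
    rw [Metric.mem_ball, hdist]; linarith
  rcases hqA with h | h
  · have : q 0 ≤ 0 := h
    rw [hq0] at this; linarith
  · have := h.2.2; rw [hq1, hp1] at this; linarith

lemma B_subset_closure_interior :
    {p : Plane | p 0 ≤ 2} ⊆ closure (interior {p : Plane | p 0 ≤ 2}) := by
  intro p hp
  have hp' : p 0 ≤ 2 := hp
  have hsub : {p : Plane | p 0 < 2} ⊆ interior {p : Plane | p 0 ≤ 2} := by
    apply interior_maximal
    · intro q hq; exact le_of_lt (show q 0 < 2 from hq)
    · exact isOpen_lt contProj continuous_const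
  apply closure_mono hsub
  rw [Metric.mem_closure_iff]
  intro ε hε
  refine ⟨p + (EuclideanSpace.single 0 (-(ε/2)) : Plane), ?_, ?_⟩
  · have h0 : (p + (EuclideanSpace.single 0 (-(ε/2)) : Plane)) 0 = p 0 - ε/2 := by
      simp [EuclideanSpace.single_apply]; ring
    show (p + (EuclideanSpace.single 0 (-(ε/2)) : Plane)) 0 < 2
    rw [h0]; linarith
  · rw [dist_comm]
    have h1 : dist (p + (EuclideanSpace.single 0 (-(ε/2)) : Plane)) p = ε/2 := by
      simp [dist_add_left, abs_of_pos hε]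
    rw [h1]; linarith

/-- Example 1.2: a half plane with a segment attached and a half plane satisfy
`A ≤ B` and `B ≤ A` but are not geometrically equal. -/
theorem halfPlane_counterexample :
    let A : Set Plane := {p | p 0 ≤ 0} ∪ {p | 0 ≤ p 0 ∧ p 0 ≤ 1 ∧ p 1 = 2}
    let B : Set Plane := {p | p 0 ≤ 2}
    GeomLe A B ∧ GeomLe B A ∧ ¬ GeomEq A B := by
  intro A B
  refine ⟨?_, ?_, ?_⟩
  · -- A ≤ B via identity
    refine ⟨id, isometry_id, surjective_id, ?_⟩
    rw [image_id]
    rintro p (hp | hp)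
    · have : p 0 ≤ 0 := hp
      show p 0 ≤ 2; linarith
    · have : p 0 ≤ 1 := hp.2.1
      show p 0 ≤ 2; linarith
  · -- B ≤ A via translation by (-2, 0)
    refine ⟨fun p => p + (EuclideanSpace.single 0 (-2) : Plane),
      Isometry.of_dist_eq fun a b => by simp, ?_, ?_⟩
    · intro q
      exact ⟨q - (EuclideanSpace.single 0 (-2) : Plane), sub_add_cancel ..⟩
    · rintro q ⟨p, hp, rfl⟩
      left
      have h0 : (p + (EuclideanSpace.single 0 (-2) : Plane)) 0 = p 0 - 2 := by
        simp [EuclideanSpace.single_apply]; ring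
      have hp' : p 0 ≤ 2 := hp
      show (p + (EuclideanSpace.single 0 (-2) : Plane)) 0 ≤ 0
      rw [h0]; linarith
  · -- ¬ GeomEq A B
    rintro ⟨f, hiso, hsurj, himg⟩
    have hinj := hiso.injective
    let e : Plane ≃ₜ Plane :=
      (IsometryEquiv.mk (Equiv.ofBijective f ⟨hinj, hsurj⟩) hiso).toHomeomorph
    have hef : ∀ s : Set Plane, e '' s = f '' s := fun s => rfl
    have key : f '' (closure (interior A)) = B := by
      rw [← hef, e.image_closure, e.image_interior, hef, himg]
      exact Subset.antisymm (closure_minimal interior_subset (closedHalf 2))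
        B_subset_closure_interior
    have heq : closure (interior A) = A := by
      apply image_injective.mpr hinj
      rw [key, himg]
    have hmem : (!₂[1, 2] : Plane) ∈ A := by
      right
      exact ⟨by norm_num, by norm_num, by norm_num⟩
    rw [← heq] at hmem
    have h1 : (!₂[1, 2] : Plane) ∈ {p : Plane | p 0 ≤ 0} :=
      closure_minimal interior_A_subset (closedHalf 0) hmem
    have : (1:ℝ) ≤ 0 := h1
    linarith
end

section
/- Let A = {(x,y) ∈ ℝ² : x ≥ 0, y ≥ 0} (a closed right angle) and let B = A \ {(x,y) : x ≥ 0, y ≥ 0, x + y < 1}. Then A ≤ B and B ≤ A, but there is no surjective isometry f : ℝ² → ℝ² with f(A) = B, i.e. A is not geometrically equal to B. -/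
open Set Function

noncomputable def mypt (x y : ℝ) : Plane := WithLp.toLp 2 ![x, y]

lemma mypt_zero (x y : ℝ) : mypt x y 0 = x := rfl
lemma mypt_one (x y : ℝ) : mypt x y 1 = y := rfl

lemma lineMap_coord (x z : Plane) (t : ℝ) (i : Fin 2) :
    (AffineMap.lineMap x z t : Plane) i = (1 - t) * x i + t * z i := by
  simp [AffineMap.lineMap_apply_module]

/-- Any nonzero point of the quadrant is strictly between two points of the quadrant. -/
lemma extA (p : Plane) (hp : 0 ≤ p 0 ∧ 0 ≤ p 1)
    (h : ∀ x z : Plane, (0 ≤ x 0 ∧ 0 ≤ x 1) → (0 ≤ z 0 ∧ 0 ≤ z 1) →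
      dist x p + dist p z = dist x z → p = x ∨ p = z) : p = (0 : Plane) := by
  have h0 : p 0 = 0 := by
    by_contra h0
    have hpos : 0 < p 0 := lt_of_le_of_ne hp.1 (Ne.symm h0)
    set x : Plane := mypt 0 (p 1) with hx
    set z : Plane := mypt (2 * p 0) (p 1) with hz
    have hbtw : Wbtw ℝ x p z := by
      refine ⟨1/2, ⟨by norm_num, by norm_num⟩, ?_⟩
      refine PiLp.ext fun i => ?_
      rw [lineMap_coord]
      fin_cases i <;>
        simp [hx, hz, mypt_zero, mypt_one] <;> ring
    have hd := hbtw.dist_add_dist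
    rcases h x z ⟨by rw [hx, mypt_zero], by rw [hx, mypt_one]; exact hp.2⟩
      ⟨by rw [hz, mypt_zero]; linarith, by rw [hz, mypt_one]; exact hp.2⟩ hd with he | he
    · have := congrArg (fun v : Plane => v 0) he
      simp only [hx, mypt_zero] at this
      exact h0 this
    · have := congrArg (fun v : Plane => v 0) he
      simp only [hz, mypt_zero] at this
      linarith
  have h1 : p 1 = 0 := by
    by_contra h1
    have hpos : 0 < p 1 := lt_of_le_of_ne hp.2 (Ne.symm h1)
    set x : Plane := mypt (p 0) 0 with hx
    set z : Plane := mypt (p 0) (2 * p 1) with hz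
    have hbtw : Wbtw ℝ x p z := by
      refine ⟨1/2, ⟨by norm_num, by norm_num⟩, ?_⟩
      refine PiLp.ext fun i => ?_
      rw [lineMap_coord]
      fin_cases i <;>
        simp [hx, hz, mypt_zero, mypt_one] <;> ring
    have hd := hbtw.dist_add_dist
    rcases h x z ⟨by rw [hx, mypt_zero]; exact hp.1, by rw [hx, mypt_one]⟩
      ⟨by rw [hz, mypt_zero]; exact hp.1, by rw [hz, mypt_one]; linarith⟩ hd with he | he
    · have := congrArg (fun v : Plane => v 1) he
      simp only [hx, mypt_one] at this
      exact h1 this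
    · have := congrArg (fun v : Plane => v 1) he
      simp only [hz, mypt_one] at this
      linarith
  refine PiLp.ext fun i => ?_
  fin_cases i
  · exact h0
  · exact h1

/-- The point `(1,0)` is extreme in `B`. -/
lemma extB₁ (x z : Plane)
    (hx : 0 ≤ x 0 ∧ 0 ≤ x 1) (hx' : 1 ≤ x 0 + x 1)
    (hz : 0 ≤ z 0 ∧ 0 ≤ z 1) (hz' : 1 ≤ z 0 + z 1)
    (hd : dist x (mypt 1 0) + dist (mypt 1 0) z = dist x z) :
    mypt 1 0 = x ∨ mypt 1 0 = z := by
  have hbtw : Wbtw ℝ x (mypt 1 0) z := dist_add_dist_eq_iff.mp hd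
  rcases hbtw with ⟨t, ⟨ht0, ht1⟩, hline⟩
  have hc0 := congrArg (fun v : Plane => v 0) hline
  have hc1 := congrArg (fun v : Plane => v 1) hline
  simp only [lineMap_coord, mypt_zero, mypt_one] at hc0 hc1
  rcases eq_or_lt_of_le ht0 with rfl | ht0'
  · left
    have e0 : x 0 = 1 := by nlinarith
    have e1 : x 1 = 0 := by nlinarith
    refine (PiLp.ext fun i => ?_).symm
    fin_cases i
    · exact e0
    · exact e1
  rcases eq_or_lt_of_le ht1 with rfl | ht1'
  · right
    have e0 : z 0 = 1 := by nlinarith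
    have e1 : z 1 = 0 := by nlinarith
    refine (PiLp.ext fun i => ?_).symm
    fin_cases i
    · exact e0
    · exact e1
  -- 0 < t < 1
  have hx1 : x 1 = 0 := by nlinarith [hx.2, hz.2]
  have hz1 : z 1 = 0 := by nlinarith [hx.2, hz.2]
  have hx0 : x 0 = 1 := by nlinarith [hx.1, hz.1]
  left
  refine (PiLp.ext fun i => ?_).symm
  fin_cases i
  · exact hx0
  · exact hx1

/-- The point `(0,1)` is extreme in `B`. -/
lemma extB₂ (x z : Plane)
    (hx : 0 ≤ x 0 ∧ 0 ≤ x 1) (hx' : 1 ≤ x 0 + x 1)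
    (hz : 0 ≤ z 0 ∧ 0 ≤ z 1) (hz' : 1 ≤ z 0 + z 1)
    (hd : dist x (mypt 0 1) + dist (mypt 0 1) z = dist x z) :
    mypt 0 1 = x ∨ mypt 0 1 = z := by
  have hbtw : Wbtw ℝ x (mypt 0 1) z := dist_add_dist_eq_iff.mp hd
  rcases hbtw with ⟨t, ⟨ht0, ht1⟩, hline⟩
  have hc0 := congrArg (fun v : Plane => v 0) hline
  have hc1 := congrArg (fun v : Plane => v 1) hline
  simp only [lineMap_coord, mypt_zero, mypt_one] at hc0 hc1
  rcases eq_or_lt_of_le ht0 with rfl | ht0'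
  · left
    have e0 : x 0 = 0 := by nlinarith
    have e1 : x 1 = 1 := by nlinarith
    refine (PiLp.ext fun i => ?_).symm
    fin_cases i
    · exact e0
    · exact e1
  rcases eq_or_lt_of_le ht1 with rfl | ht1'
  · right
    have e0 : z 0 = 0 := by nlinarith
    have e1 : z 1 = 1 := by nlinarith
    refine (PiLp.ext fun i => ?_).symm
    fin_cases i
    · exact e0
    · exact e1
  have hx0 : x 0 = 0 := by nlinarith [hx.1, hz.1]
  have hz0 : z 0 = 0 := by nlinarith [hx.1, hz.1]
  have hx1 : x 1 = 1 := by nlinarith [hx.2, hz.2]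
  left
  refine (PiLp.ext fun i => ?_).symm
  fin_cases i
  · exact hx0
  · exact hx1

/-- Example 1.3: the closed right angle `A` and the figure `B` obtained from `A`
by removing the open triangle `{x ≥ 0, y ≥ 0, x + y < 1}` satisfy `A ≤ B` and
`B ≤ A` but are not geometrically equal. -/
theorem rightAngle_counterexample :
    let A : Set Plane := {p | 0 ≤ p 0 ∧ 0 ≤ p 1}
    let B : Set Plane := A \ {p | 0 ≤ p 0 ∧ 0 ≤ p 1 ∧ p 0 + p 1 < 1}
    GeomLe A B ∧ GeomLe B A ∧ ¬ GeomEq A B := by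
  intro A B
  have hBmem : ∀ p : Plane, p ∈ B → (0 ≤ p 0 ∧ 0 ≤ p 1) ∧ 1 ≤ p 0 + p 1 := by
    intro p hp
    refine ⟨hp.1, ?_⟩
    by_contra hlt
    exact hp.2 ⟨hp.1.1, hp.1.2, by linarith⟩
  refine ⟨?_, ?_, ?_⟩
  · -- translate by (1,1)
    refine ⟨fun p => p + mypt 1 1, Isometry.of_dist_eq fun a b => dist_add_right a b _,
      fun q => ⟨q - mypt 1 1, sub_add_cancel q (mypt 1 1)⟩, ?_⟩
    rintro _ ⟨p, hp, rfl⟩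
    show p + mypt 1 1 ∈ B
    have e0 : (p + mypt 1 1) 0 = p 0 + 1 := by rw [PiLp.add_apply, mypt_zero]
    have e1 : (p + mypt 1 1) 1 = p 1 + 1 := by rw [PiLp.add_apply, mypt_one]
    have hp0 := hp.1
    have hp1 := hp.2
    refine ⟨⟨by rw [e0]; linarith, by rw [e1]; linarith⟩, ?_⟩
    rintro ⟨-, -, hsum⟩
    rw [e0, e1] at hsum
    linarith
  · exact ⟨id, isometry_id, surjective_id, by simp [B, Set.diff_subset]⟩
  · rintro ⟨f, hiso, hsurj, hAB⟩
    have hq1 : mypt 1 0 ∈ B := by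
      refine ⟨⟨by norm_num [mypt_zero], by norm_num [mypt_one]⟩, ?_⟩
      rintro ⟨-, -, h⟩
      rw [mypt_zero, mypt_one] at h
      linarith
    have hq2 : mypt 0 1 ∈ B := by
      refine ⟨⟨by norm_num [mypt_zero], by norm_num [mypt_one]⟩, ?_⟩
      rintro ⟨-, -, h⟩
      rw [mypt_zero, mypt_one] at h
      linarith
    rw [← hAB] at hq1 hq2
    obtain ⟨p₁, hp₁A, hp₁⟩ := hq1
    obtain ⟨p₂, hp₂A, hp₂⟩ := hq2
    have hp₁0 : p₁ = (0 : Plane) := by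
      refine extA p₁ hp₁A ?_
      intro x z hxA hzA hd
      have hd' : dist (f x) (mypt 1 0) + dist (mypt 1 0) (f z) = dist (f x) (f z) := by
        rw [← hp₁, hiso.dist_eq, hiso.dist_eq, hiso.dist_eq]
        exact hd
      have hfx : f x ∈ B := hAB ▸ Set.mem_image_of_mem f hxA
      have hfz : f z ∈ B := hAB ▸ Set.mem_image_of_mem f hzA
      obtain ⟨hfx1, hfx2⟩ := hBmem _ hfx
      obtain ⟨hfz1, hfz2⟩ := hBmem _ hfz
      rcases extB₁ (f x) (f z) hfx1 hfx2 hfz1 hfz2 hd' with he | he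
      · left; exact hiso.injective (hp₁.trans he)
      · right; exact hiso.injective (hp₁.trans he)
    have hp₂0 : p₂ = (0 : Plane) := by
      refine extA p₂ hp₂A ?_
      intro x z hxA hzA hd
      have hd' : dist (f x) (mypt 0 1) + dist (mypt 0 1) (f z) = dist (f x) (f z) := by
        rw [← hp₂, hiso.dist_eq, hiso.dist_eq, hiso.dist_eq]
        exact hd
      have hfx : f x ∈ B := hAB ▸ Set.mem_image_of_mem f hxA
      have hfz : f z ∈ B := hAB ▸ Set.mem_image_of_mem f hzA
      obtain ⟨hfx1, hfx2⟩ := hBmem _ hfx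
      obtain ⟨hfz1, hfz2⟩ := hBmem _ hfz
      rcases extB₂ (f x) (f z) hfx1 hfx2 hfz1 hfz2 hd' with he | he
      · left; exact hiso.injective (hp₂.trans he)
      · right; exact hiso.injective (hp₂.trans he)
    have : mypt 1 0 = mypt 0 1 := by
      rw [← hp₁, ← hp₂, hp₁0, hp₂0]
    have := congrArg (fun v : Plane => v 0) this
    simp only [mypt_zero] at this
    linarith
end

section
/- Let ω ∈ ℝ be such that ω/π is irrational, let aₖ = (cos kω, sin kω) ∈ ℝ² for k = 0, 1, 2, ..., let A = {aₖ : k ∈ ℕ} and B = A \ {a₁}. Then A ≤ B (via the rotation by angle 2ω about the origin) and B ≤ A, but there is no surjective isometry f : ℝ² → ℝ² with f(A) = B, i.e. A is not geometrically equal to B. In particular, A is a bounded set that is not good. -/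
open Set Function

/-!
Identify the plane with `ℂ`, so that `A = {uᵏ : k ∈ ℕ}` with `u = exp (iω)`; irrationality of
`ω / π` says exactly that `u` has infinite order in the circle group. Multiplication by `u²` maps
`A` into `B`. Conversely, a surjective isometry `g` with `g(A) = B` maps three points of the unit
circle into it, so it fixes the centre `0` and is `z ↦ v z` or `z ↦ v z̄` with `|v| = 1`. In the
first case `v = g 1 ∈ B` and `1 ∈ g(A)` force `v = 1`, and then `u = g u ∈ B`; in the second case
`v = uᵐ` and `g (uᵐ⁺¹) = u⁻¹` would lie in `A`.
-/

open scoped Pointwise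
open EuclideanGeometry Module Submonoid Complex

theorem Isometry.apply_center_eq_of_finrank_eq_two {V P : Type*} [NormedAddCommGroup V]
    [InnerProductSpace ℝ V] [MetricSpace P] [NormedAddTorsor V P] [FiniteDimensional ℝ V]
    (hd : finrank ℝ V = 2) {f : P → P} (hf : Isometry f) {s : Sphere P} {p₁ p₂ p₃ : P}
    (h₁₂ : p₁ ≠ p₂) (h₁₃ : p₁ ≠ p₃) (h₂₃ : p₂ ≠ p₃) (hp₁ : p₁ ∈ s) (hp₂ : p₂ ∈ s) (hp₃ : p₃ ∈ s)
    (hfp₁ : f p₁ ∈ s) (hfp₂ : f p₂ ∈ s) (hfp₃ : f p₃ ∈ s) : f s.center = s.center := by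
  let s' : Sphere P := ⟨f s.center, s.radius⟩
  have hmem : ∀ p ∈ s, f p ∈ s' := fun p hp => by
    rw [mem_sphere, hf.dist_eq]
    exact hp
  by_contra hne
  have hs : s ≠ s' := fun h => hne (congrArg Sphere.center h).symm
  rcases eq_of_mem_sphere_of_mem_sphere_of_finrank_eq_two hd hs (hf.injective.ne h₁₂) hfp₁ hfp₂
    hfp₃ (hmem _ hp₁) (hmem _ hp₂) (hmem _ hp₃) with h | h
  · exact h₁₃ (hf.injective h).symm
  · exact h₂₃ (hf.injective h).symm

section CommGroup

variable {G : Type*} [CommGroup G] {u : G}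

theorem pow_two_smul_powers_subset_sdiff (hu : ¬IsOfFinOrder u) :
    u ^ 2 • (powers u : Set G) ⊆ (powers u : Set G) \ {u} := by
  rintro _ ⟨_, ⟨k, rfl⟩, rfl⟩
  have hk : u ^ 2 • u ^ k = u ^ (k + 2) := by rw [smul_eq_mul, ← pow_add, add_comm]
  refine ⟨⟨k + 2, hk.symm⟩, fun h => ?_⟩
  have : k + 2 = 1 := injective_pow_iff_not_isOfFinOrder.mpr hu <|
    show u ^ (k + 2) = u ^ 1 by rw [← hk, pow_one]; exact h
  omega

theorem smul_powers_ne_sdiff (hu : ¬IsOfFinOrder u) (v : G) :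
    v • (powers u : Set G) ≠ (powers u : Set G) \ {u} := by
  intro h
  have hu' : Function.Injective (u ^ · : ℕ → G) := injective_pow_iff_not_isOfFinOrder.mpr hu
  have hu1 : (1 : G) ≠ u := fun h1 => absurd (@hu' 0 1 (by simpa using h1)) (by norm_num)
  obtain ⟨_, ⟨k, rfl⟩, hk⟩ : (1 : G) ∈ v • (powers u : Set G) := h ▸ ⟨⟨0, pow_zero u⟩, hu1⟩
  obtain ⟨⟨m, rfl⟩, -⟩ : v ∈ (powers u : Set G) \ {u} := h ▸ ⟨1, ⟨0, pow_zero u⟩, mul_one v⟩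
  have hmk : m + k = 0 := hu' (by simpa [pow_add] using hk)
  obtain rfl : m = 0 := by omega
  have hu_mem : u ∈ (powers u : Set G) \ {u} := h ▸ ⟨u, ⟨1, pow_one u⟩, by simp⟩
  exact hu_mem.2 rfl

theorem not_smul_inv_powers_subset (hu : ¬IsOfFinOrder u) (v : G) :
    ¬ v • (powers u : Set G)⁻¹ ⊆ powers u := by
  intro h
  obtain ⟨m, rfl⟩ : v ∈ powers u := h ⟨1, by simp, by simp⟩
  obtain ⟨n, hn⟩ : u⁻¹ ∈ powers u :=
    h ⟨(u ^ (m + 1))⁻¹, by simp [pow_mem (mem_powers u)], by simp [pow_succ]⟩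
  have : n + 1 = 0 := injective_pow_iff_not_isOfFinOrder.mpr hu (by simp_all [pow_succ])
  omega

end CommGroup

theorem Circle.not_isOfFinOrder_exp {ω : ℝ} (hω : Irrational (ω / Real.pi)) :
    ¬IsOfFinOrder (Circle.exp ω) := by
  rw [isOfFinOrder_iff_pow_eq_one]
  rintro ⟨n, hn, h⟩
  obtain ⟨m, hm⟩ := Circle.exp_eq_one.mp (by rwa [← Circle.exp_natCast_mul] at h)
  refine hω ⟨2 * m / n, ?_⟩
  push_cast
  field_simp
  linarith

theorem Circle.orthonormalBasisOneI_repr_exp (t : ℝ) :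
    orthonormalBasisOneI.repr (Circle.exp t) = !₂[Real.cos t, Real.sin t] := by
  ext i
  fin_cases i <;> simp [Circle.coe_exp, exp_ofReal_mul_I_re, exp_ofReal_mul_I_im]

theorem Circle.rotation_image_coeHom (v : Circle) (T : Set Circle) :
    rotation v '' (Circle.coeHom '' T) = Circle.coeHom '' (v • T) := by
  rw [← image_smul, image_image, image_image]
  simp only [rotation_apply, map_mul, smul_eq_mul]
  rfl

theorem Circle.conj_rotation_image_coeHom (v : Circle) (T : Set Circle) :
    (conjLIE.trans (rotation v)) '' (Circle.coeHom '' T) = Circle.coeHom '' (v • T⁻¹) := by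
  rw [← image_smul, ← image_inv_eq_inv, image_image, image_image, image_image]
  refine image_congr fun w _ => ?_
  simp only [LinearIsometryEquiv.trans_apply, conjLIE_apply, rotation_apply, smul_eq_mul, map_mul]
  exact congrArg _ (Circle.coe_inv_eq_conj w).symm

theorem Circle.isometryEquiv_image_powers_ne {u : Circle} (hu : ¬IsOfFinOrder u) (g : ℂ ≃ᵢ ℂ) :
    g '' (coeHom '' powers u) ≠ coeHom '' ((powers u : Set Circle) \ {u}) := by
  intro h
  let s : Sphere ℂ := ⟨0, 1⟩
  have hs : ∀ w : Circle, coeHom w ∈ s := fun w => by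
    simp only [s, mem_sphere, dist_zero_right]
    exact Circle.norm_coe w
  have hgs : ∀ n : ℕ, g (coeHom (u ^ n)) ∈ s := fun n => by
    obtain ⟨w, -, hw⟩ : g (coeHom (u ^ n)) ∈ coeHom '' ((powers u : Set Circle) \ {u}) :=
      h ▸ mem_image_of_mem g (mem_image_of_mem _ ⟨n, rfl⟩)
    exact hw ▸ hs w
  have hne : ∀ {a b : ℕ}, a ≠ b → coeHom (u ^ a) ≠ coeHom (u ^ b) := fun hab =>
    Circle.coe_injective.ne ((injective_pow_iff_not_isOfFinOrder.mpr hu).ne hab)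
  have h0 : g 0 = 0 := g.isometry.apply_center_eq_of_finrank_eq_two finrank_real_complex
    (hne (by norm_num : 0 ≠ 1)) (hne (by norm_num : 0 ≠ 2)) (hne (by norm_num : 1 ≠ 2))
    (hs _) (hs _) (hs _) (hgs 0) (hgs 1) (hgs 2)
  have hg : ⇑g = g.toRealLinearIsometryEquivOfMapZero h0 :=
    (g.coe_toRealLinearIsometryEquivOfMapZero h0).symm
  have hinj := image_injective.mpr Circle.coe_injective
  obtain ⟨v, hv | hv⟩ := linear_isometry_complex (g.toRealLinearIsometryEquivOfMapZero h0)
  · rw [hg, hv, rotation_image_coeHom] at h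
    exact smul_powers_ne_sdiff hu v (hinj h)
  · rw [hg, hv, conj_rotation_image_coeHom] at h
    exact not_smul_inv_powers_subset hu v (hinj h ▸ sdiff_subset)

section Transfer

variable {X : Type*} [MetricSpace X] (e : X ≃ᵢ Plane) {S T : Set X}

theorem geomLe_image_of_image_subset (g : X ≃ᵢ X) (h : g '' S ⊆ T) : GeomLe (e '' S) (e '' T) := by
  refine ⟨(e.symm.trans g).trans e, IsometryEquiv.isometry _, IsometryEquiv.surjective _, ?_⟩
  rintro _ ⟨_, ⟨x, hx, rfl⟩, rfl⟩
  exact ⟨g x, h ⟨x, hx, rfl⟩, by simp⟩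

theorem GeomEq.exists_isometryEquiv_image_eq (h : GeomEq (e '' S) (e '' T)) :
    ∃ g : X ≃ᵢ X, g '' S = T := by
  obtain ⟨f, hf, hfs, hST⟩ := h
  let F : Plane ≃ᵢ Plane := { Equiv.ofBijective f ⟨hf.injective, hfs⟩ with isometry_toFun := hf }
  refine ⟨(e.trans F).trans e.symm, ?_⟩
  calc ((e.trans F).trans e.symm) '' S = e.symm '' (f '' (e '' S)) := by
        rw [image_image, image_image]
        rfl
    _ = T := by
        rw [hST]
        exact e.symm_image_image T

end Transfer

/-- Example 1.4: for an angle `ω` with `ω / π` irrational, the orbit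
`A = {(cos kω, sin kω) : k ∈ ℕ}` and `B = A \ {a₁}` satisfy `A ≤ B` and `B ≤ A`
but are not geometrically equal; in particular `A` is a bounded set that is not good. -/
theorem irrationalRotation_counterexample (ω : ℝ) (hω : Irrational (ω / Real.pi)) :
    let a : ℕ → Plane := fun k => !₂[Real.cos (k * ω), Real.sin (k * ω)]
    let A : Set Plane := Set.range a
    let B : Set Plane := A \ {a 1}
    GeomLe A B ∧ GeomLe B A ∧ ¬ GeomEq A B ∧ Bornology.IsBounded A ∧ ¬ IsGood A := by
  intro a A B
  set u := Circle.exp ω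
  have hu : ¬IsOfFinOrder u := Circle.not_isOfFinOrder_exp hω
  let e := orthonormalBasisOneI.repr
  have ha : ∀ k : ℕ, a k = e (Circle.coeHom (u ^ k)) := fun k => by
    rw [← Circle.exp_natCast_mul]
    exact (Circle.orthonormalBasisOneI_repr_exp _).symm
  have hA : A = e '' (Circle.coeHom '' powers u) := by
    rw [image_image, coe_powers, ← range_comp]
    exact congrArg range (funext ha)
  have hB : B = e '' (Circle.coeHom '' ((powers u : Set Circle) \ {u})) := by
    have hcoe : Injective Circle.coeHom := Circle.coe_injective
    change A \ {a 1} = _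
    rw [ha 1, pow_one, image_sdiff hcoe, image_sdiff e.injective, ← hA, image_singleton,
      image_singleton]
  have hAB : GeomLe A B := by
    rw [hA, hB]
    refine geomLe_image_of_image_subset e.toIsometryEquiv (rotation (u ^ 2)).toIsometryEquiv ?_
    rw [LinearIsometryEquiv.coe_toIsometryEquiv, Circle.rotation_image_coeHom]
    exact image_mono (pow_two_smul_powers_subset_sdiff hu)
  have hBA : GeomLe B A := ⟨id, isometry_id, surjective_id, by rw [image_id]; exact sdiff_subset⟩
  have hAB_ne : ¬GeomEq A B := fun h => by
    rw [hA, hB] at h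
    obtain ⟨g, hg⟩ := GeomEq.exists_isometryEquiv_image_eq e.toIsometryEquiv h
    exact Circle.isometryEquiv_image_powers_ne hu g hg
  have hA_bdd : Bornology.IsBounded A := (Metric.isBounded_sphere (x := 0) (r := 1)).subset <|
    range_subset_iff.2 fun k => by
      rw [mem_sphere_zero_iff_norm, ha, LinearIsometryEquiv.norm_map]
      exact Circle.norm_coe _
  exact ⟨hAB, hBA, hAB_ne, hA_bdd, fun h => hAB_ne (h B hAB hBA)⟩
end

section
/- If A ⊆ ℝ² is a good set, then its complement Aᶜ = ℝ² \ A is also a good set. -/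
open Set Function

/-
Complementation reverses `≤` (if `e S ⊆ T` then `e⁻¹ Tᶜ ⊆ Sᶜ`) and preserves `≈`, since
isometries of the plane are bijective. So `Aᶜ ≤ B ≤ Aᶜ` gives `A ≤ Bᶜ ≤ A`, hence `A ≈ Bᶜ`
because `A` is good, and complementing once more gives `Aᶜ ≈ B`.
-/

noncomputable def Isometry.isometryEquivOfSurjective {α β : Type*} [EMetricSpace α]
    [PseudoEMetricSpace β] {f : α → β} (hf : Isometry f) (hs : Surjective f) : α ≃ᵢ β :=
  { Equiv.ofBijective f ⟨hf.injective, hs⟩ with isometry_toFun := hf }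

theorem geomLe_iff {S T : Set Plane} : GeomLe S T ↔ ∃ e : Plane ≃ᵢ Plane, e '' S ⊆ T :=
  ⟨fun ⟨_, hf, hs, h⟩ => ⟨hf.isometryEquivOfSurjective hs, h⟩,
    fun ⟨e, h⟩ => ⟨e, e.isometry, e.surjective, h⟩⟩

theorem geomEq_iff {S T : Set Plane} : GeomEq S T ↔ ∃ e : Plane ≃ᵢ Plane, e '' S = T :=
  ⟨fun ⟨_, hf, hs, h⟩ => ⟨hf.isometryEquivOfSurjective hs, h⟩,
    fun ⟨e, h⟩ => ⟨e, e.isometry, e.surjective, h⟩⟩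

theorem GeomLe.compl_antitone {S T : Set Plane} (h : GeomLe S T) : GeomLe Tᶜ Sᶜ := by
  obtain ⟨e, he⟩ := geomLe_iff.mp h
  refine geomLe_iff.mpr ⟨e.symm, ?_⟩
  rw [e.image_symm, preimage_compl]
  exact compl_subset_compl.mpr (image_subset_iff.mp he)

theorem GeomEq.compl {S T : Set Plane} (h : GeomEq S T) : GeomEq Sᶜ Tᶜ := by
  obtain ⟨e, he⟩ := geomEq_iff.mp h
  exact geomEq_iff.mpr ⟨e, by rw [image_compl_eq e.bijective, he]⟩

/-- Proposition 1.4: if `A` is a good set then its complement is also a good set. -/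
theorem isGood_compl (A : Set Plane) (hA : IsGood A) : IsGood Aᶜ := by
  intro B hAB hBA
  have hAB' : GeomLe A Bᶜ := by simpa using hBA.compl_antitone
  have hBA' : GeomLe Bᶜ A := by simpa using hAB.compl_antitone
  simpa using (hA Bᶜ hAB' hBA').compl
end

section
/- Every compact subset A of the Euclidean plane ℝ² is a good set: for every figure B ⊆ ℝ², if A ≤ B and B ≤ A, then A ≈ B. -/
open Set Function

lemma isometry_iterate {f : Plane → Plane} (hf : Isometry f) : ∀ n, Isometry f^[n]
  | 0 => by simpa using isometry_id
  | n+1 => by rw [Function.iterate_succ]; exact (isometry_iterate hf n).comp hf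

/-- An isometry mapping a compact set into itself maps it onto itself. -/
lemma isom_image_eq_of_compact (A : Set Plane) (hA : IsCompact A)
    (f : Plane → Plane) (hf : Isometry f) (hsub : f '' A ⊆ A) : f '' A = A := by
  refine hsub.antisymm ?_
  by_contra h
  obtain ⟨a, haA, hafA⟩ : ∃ a ∈ A, a ∉ f '' A := by
    by_contra h'
    push_neg at h'
    exact h fun x hx => h' x hx
  have hfAcomp : IsCompact (f '' A) := hA.image hf.continuous
  have hne : (f '' A).Nonempty := ⟨f a, mem_image_of_mem f haA⟩
  have hpos : 0 < Metric.infDist a (f '' A) :=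
    (hfAcomp.isClosed.notMem_iff_infDist_pos hne).1 hafA
  set ε := Metric.infDist a (f '' A) with hε
  -- the orbit of a
  set u : ℕ → Plane := fun n => f^[n] a with hu
  have humem : ∀ n, u n ∈ A := by
    intro n
    induction n with
    | zero => exact haA
    | succ k ih =>
      have : u (k+1) = f (u k) := by simp [hu, Function.iterate_succ_apply']
      rw [this]; exact hsub (mem_image_of_mem f ih)
  have hiter_mem : ∀ k, u (k+1) ∈ f '' A := by
    intro k
    have : u (k+1) = f (u k) := by simp [hu, Function.iterate_succ_apply']
    rw [this]; exact mem_image_of_mem f (humem k)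
  have hdist : ∀ n m, n < m → ε ≤ dist (u n) (u m) := by
    intro n m hnm
    have hk : ∃ k, m = n + (k+1) := ⟨m - n - 1, by omega⟩
    obtain ⟨k, rfl⟩ := hk
    have hiso : Isometry f^[n] := isometry_iterate hf n
    have h1 : u (n + (k+1)) = f^[n] (u (k+1)) := by
      show f^[n + (k+1)] a = f^[n] (f^[k+1] a)
      rw [← Function.iterate_add_apply, Nat.add_comm]
    have : dist (u n) (u (n + (k+1))) = dist a (u (k+1)) := by
      rw [h1]
      have : u n = f^[n] a := rfl
      rw [this, hiso.dist_eq]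
    rw [this]
    exact Metric.infDist_le_dist_of_mem (hiter_mem k)
  -- extract a convergent subsequence: contradiction
  obtain ⟨x, -, φ, hφ, hconv⟩ := hA.tendsto_subseq humem
  have hcauchy : CauchySeq (u ∘ φ) := hconv.cauchySeq
  obtain ⟨N, hN⟩ := Metric.cauchySeq_iff.1 hcauchy ε hpos
  have h1 := hN (N+1) (by omega) N (le_refl N)
  have h2 := hdist (φ N) (φ (N+1)) (hφ (by omega))
  rw [dist_comm] at h1
  simp only [Function.comp] at h1
  linarith

/-- Proposition 1.5: every compact subset of the plane is a good set. -/
theorem isGood_of_isCompact (A : Set Plane) (hA : IsCompact A) : IsGood A := by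
  intro B ⟨f, hf, hfs, hfAB⟩ ⟨g, hg, hgs, hgBA⟩
  have hgfA : (g ∘ f) '' A ⊆ A := by
    rw [Set.image_comp]
    exact (Set.image_mono (f := g) hfAB).trans hgBA
  have heq : (g ∘ f) '' A = A :=
    isom_image_eq_of_compact A hA (g ∘ f) (hg.comp hf) hgfA
  refine ⟨f, hf, hfs, ?_⟩
  -- g '' B = A from squeeze, then use injectivity of g
  have hgB : g '' B = A := by
    refine hgBA.antisymm ?_
    calc A = (g ∘ f) '' A := heq.symm
    _ = g '' (f '' A) := Set.image_comp g f A
    _ ⊆ g '' B := Set.image_mono (f := g) hfAB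
  have hginj : Function.Injective g := hg.injective
  have : g '' (f '' A) = g '' B := by
    rw [← Set.image_comp, heq, hgB]
  exact (Set.image_eq_image hginj).1 this
end

section
/- Every compact subset of the Euclidean plane ℝ² is strongly good: for every surjective isometry f : ℝ² → ℝ² with f(A) ⊆ A, one has f(A) = A. -/
/-!
An isometry `f` with `f '' A ⊆ A` is recurrent on a compact `A`: for `x ∈ A` the orbit
`fⁿ x` has a convergent, hence Cauchy, subsequence, so `fᵐ x` and `fⁿ x` are `ε`-close for some
`m < n`, and applying the isometry backwards gives `dist x (fⁿ⁻ᵐ x) < ε`. Thus every point of `A`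
lies in the closure of the compact, hence closed, set `f '' A`.
-/

open Set Function

theorem Isometry.iterate {α : Type*} [PseudoEMetricSpace α] {f : α → α} (hf : Isometry f)
    (n : ℕ) : Isometry f^[n] := by
  induction n with
  | zero => exact isometry_id
  | succ n ih => exact ih.comp hf

section

variable {α : Type*} {f : α → α} {A : Set α}

theorem IsCompact.exists_dist_iterate_succ_lt [PseudoMetricSpace α] (hA : IsCompact A)
    (hf : Isometry f) (hfA : MapsTo f A A) {x : α} (hx : x ∈ A) {ε : ℝ} (hε : 0 < ε) :
    ∃ k, dist x (f^[k + 1] x) < ε := by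
  obtain ⟨y, -, φ, hφ, hlim⟩ := hA.tendsto_subseq (hfA.iterate · hx)
  obtain ⟨N, hN⟩ := Metric.cauchySeq_iff.1 hlim.cauchySeq ε hε
  obtain ⟨k, hk⟩ := Nat.exists_eq_add_of_lt (hφ (Nat.lt_succ_self N))
  have hclose : dist (f^[φ N] x) (f^[φ (N + 1)] x) < ε := hN N le_rfl (N + 1) N.le_succ
  rw [hk, add_assoc, iterate_add_apply, (hf.iterate _).dist_eq] at hclose
  exact ⟨k, hclose⟩

theorem IsCompact.image_eq_of_isometry_of_mapsTo [MetricSpace α] (hA : IsCompact A)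
    (hf : Isometry f) (hfA : MapsTo f A A) : f '' A = A := by
  refine hfA.image_subset.antisymm fun x hx => ?_
  rw [← (hA.image hf.continuous).isClosed.closure_eq, Metric.mem_closure_iff]
  intro ε hε
  obtain ⟨k, hk⟩ := hA.exists_dist_iterate_succ_lt hf hfA hx hε
  exact ⟨_, mem_image_of_mem f (hfA.iterate k hx), by rwa [← iterate_succ_apply' f k x]⟩

end

/-- Proposition 1.6: every compact subset of the plane is strongly good. -/
theorem isStronglyGood_of_isCompact (A : Set Plane) (hA : IsCompact A) :
    IsStronglyGood A :=
  fun _ hf _ hfA => hA.image_eq_of_isometry_of_mapsTo hf (mapsTo_iff_image_subset.2 hfA)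
end

section
/- Every strongly good subset of the Euclidean plane ℝ² is a good set: if A is strongly good and B ⊆ ℝ² satisfies A ≤ B and B ≤ A, then A ≈ B. -/
open Set Function

/-- Proposition 1.7: every strongly good subset of the plane is a good set. -/
theorem isGood_of_isStronglyGood (A : Set Plane) (hA : IsStronglyGood A) :
    IsGood A := by
  rintro B ⟨f, hf, hfs, hfA⟩ ⟨g, hg, hgs, hgB⟩
  have hgf : (g ∘ f) '' A = A :=
    hA (g ∘ f) (hg.comp hf) (hgs.comp hfs)
      (by rw [Set.image_comp]; exact (Set.image_mono (f := g) hfA).trans hgB)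
  have hginj : Function.Injective g := hg.injective
  have h1 : g '' (f '' A) = (g ∘ f) '' A := (Set.image_comp g f A).symm
  have h2 : B ⊆ f '' A := by
    intro b hb
    have hgb : g b ∈ A := hgB ⟨b, hb, rfl⟩
    rw [← hgf] at hgb
    obtain ⟨x, hx, hxb⟩ := hgb
    exact ⟨x, hx, hginj hxb⟩
  exact ⟨f, hf, hfs, le_antisymm hfA h2⟩
end

section
/- Every open and bounded subset A of the Euclidean plane ℝ² is strongly good: for every surjective isometry f : ℝ² → ℝ² with f(A) ⊆ A, one has f(A) = A. -/
open Set Function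

/-- Proposition 1.8: every open and bounded subset of the plane is strongly good. -/
theorem isStronglyGood_of_isOpen_isBounded (A : Set Plane)
    (hAo : IsOpen A) (hAb : Bornology.IsBounded A) : IsStronglyGood A := by
  intro f hf hsurj hsub
  -- f as an isometry equiv
  let e : Plane ≃ᵢ Plane :=
    { toEquiv := Equiv.ofBijective f ⟨hf.injective, hsurj⟩, isometry_toFun := hf }
  have hfe : ∀ x, e x = f x := fun _ => rfl
  -- iterates map A into A
  have hiter : ∀ j : ℕ, f^[j] '' A ⊆ A := by
    intro j
    induction j with
    | zero => simp
    | succ n ih =>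
      rw [Function.iterate_succ', Set.image_comp]
      exact (Set.image_mono (f := f) ih).trans hsub
  -- iterates of balls
  have hball : ∀ (j : ℕ) (x : Plane) (r : ℝ),
      f^[j] '' Metric.ball x r = Metric.ball (f^[j] x) r := by
    intro j
    induction j with
    | zero => simp
    | succ n ih =>
      intro x r
      rw [Function.iterate_succ', Set.image_comp, ih]
      simp only [Function.comp_apply]
      exact e.image_ball _ _
  apply Set.Subset.antisymm hsub
  intro x hx
  -- find ε with ball x ε ⊆ A
  obtain ⟨ε, hε, hballA⟩ := Metric.isOpen_iff.mp hAo x hx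
  -- orbit in A
  have horb : ∀ n : ℕ, f^[n] x ∈ A := fun n => hiter n ⟨x, hx, rfl⟩
  -- compact closure
  have hK : IsCompact (closure A) := hAb.isCompact_closure
  obtain ⟨a, _, φ, hφ, hconv⟩ :=
    hK.tendsto_subseq (fun n => subset_closure (horb n))
  rw [Metric.tendsto_atTop] at hconv
  obtain ⟨N, hN⟩ := hconv (ε / 2) (by linarith)
  have h1 := hN N le_rfl
  have h2 := hN (N + 1) (Nat.le_succ N)
  have hlt : φ N < φ (N + 1) := hφ (Nat.lt_succ_self N)
  have hdist : dist (f^[φ N] x) (f^[φ (N + 1)] x) < ε := by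
    calc dist (f^[φ N] x) (f^[φ (N + 1)] x)
        ≤ dist (f^[φ N] x) a + dist (f^[φ (N + 1)] x) a := dist_triangle_right _ _ _
      _ < ε / 2 + ε / 2 := add_lt_add h1 h2
      _ = ε := by ring
  set n := φ N
  set m := φ (N + 1)
  set k := m - n with hk
  have hk1 : 1 ≤ k := Nat.le_sub_of_add_le (by omega)
  have hmk : n + k = m := by omega
  have hdist2 : dist x (f^[k] x) < ε := by
    have hIso : ∀ j : ℕ, Isometry f^[j] := by
      intro j
      induction j with
      | zero => exact isometry_id
      | succ p ih => rw [Function.iterate_succ']; exact hf.comp ih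
    have : f^[m] x = f^[n] (f^[k] x) := by
      rw [← Function.iterate_add_apply]
      congr 1
      omega
    have hIn : Isometry f^[n] := hIso n
    calc dist x (f^[k] x) = dist (f^[n] x) (f^[n] (f^[k] x)) := (hIn.dist_eq _ _).symm
      _ = dist (f^[n] x) (f^[m] x) := by rw [← this]
      _ < ε := hdist
  -- z = f⁻¹ x
  set z := e.symm x with hz
  have hfz : f z = x := e.apply_symm_apply x
  have hzdist : dist z (f^[k - 1] x) < ε := by
    have : f (f^[k - 1] x) = f^[k] x := by
      have h := Function.iterate_succ_apply' f (k - 1) x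
      rw [show (k - 1).succ = k from by omega] at h
      exact h.symm
    calc dist z (f^[k - 1] x) = dist (f z) (f (f^[k - 1] x)) := (hf.dist_eq _ _).symm
      _ = dist x (f^[k] x) := by rw [hfz, this]
      _ < ε := hdist2
  have hzA : z ∈ A := by
    have : z ∈ Metric.ball (f^[k - 1] x) ε := by
      rw [Metric.mem_ball]
      exact hzdist
    rw [← hball (k - 1) x ε] at this
    exact hiter (k - 1) ((Set.image_mono hballA) this)
  exact ⟨z, hzA, hfz⟩
end

section
/- The figure L = {(x,0) ∈ ℝ² : x ≥ 0} ∪ {(0,1)} is strongly good; in fact, the only surjective isometry f : ℝ² → ℝ² with f(L) ⊆ L is the identity, so f(L) = L. -/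
open Set Function

/-!
The ray `{(x, 0) : x ≥ 0}` has no isolated points while `(0, 1)` is at distance at least `1`
from it, so an isometry mapping `L` into itself maps the ray into the ray. The point `(0, 1)`
cannot go to the ray too, since the right isosceles triangle `(0, 1), (0, 0), (1, 0)` does not
embed isometrically into a line; hence `(0, 1)` is fixed, and then so are `(0, 0)` (the only
point of the ray at distance `1` from `(0, 1)`) and `(1, 0)`. An isometry of a real inner
product space fixing `0` and a basis is the identity.
-/

section InnerProductSpace

variable {E : Type*} [NormedAddCommGroup E] [InnerProductSpace ℝ E] {f : E → E}

theorem Isometry.inner_map_eq_of_map_zero (hf : Isometry f) (h0 : f 0 = 0) {v : E}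
    (hv : f v = v) (x : E) : inner ℝ v (f x) = inner ℝ v x := by
  have hnorm : ‖f x‖ = ‖x‖ := by simpa [h0] using hf.dist_eq x 0
  have hsub : ‖f x - v‖ = ‖x - v‖ := by
    simpa [hv, dist_eq_norm] using hf.dist_eq x v
  have h₁ := norm_sub_sq_real (f x) v
  have h₂ := norm_sub_sq_real x v
  rw [hsub, hnorm] at h₁
  linarith [real_inner_comm v (f x), real_inner_comm v x]

theorem Isometry.eq_id_of_map_zero_of_map_basis {ι : Type*} (b : Module.Basis ι ℝ E)
    (hf : Isometry f) (h0 : f 0 = 0) (hb : ∀ i, f (b i) = b i) : f = id :=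
  funext fun x =>
    InnerProductSpace.ext_inner_left_basis b fun i => hf.inner_map_eq_of_map_zero h0 (hb i) x

end InnerProductSpace

namespace HalfLineWithPoint

local notation "e₀" => (WithLp.toLp 2 ![1, 0] : Plane)
local notation "e₁" => (WithLp.toLp 2 ![0, 1] : Plane)

def ray : Set Plane := {p | 0 ≤ p 0 ∧ p 1 = 0}

theorem dist_sq (x y : Plane) : dist x y ^ 2 = (x 0 - y 0) ^ 2 + (x 1 - y 1) ^ 2 := by
  simp [EuclideanSpace.dist_sq_eq, Fin.sum_univ_two, Real.dist_eq, sq_abs]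

theorem ext {x y : Plane} (h0 : x 0 = y 0) (h1 : x 1 = y 1) : x = y := by
  ext i; fin_cases i <;> assumption

theorem single_eq : ∀ i : Fin 2, EuclideanSpace.single i (1 : ℝ) = ![e₀, e₁] i := by
  rw [Fin.forall_fin_two]
  constructor <;> ext j <;> fin_cases j <;> simp

theorem zero_mem_ray : (0 : Plane) ∈ ray := ⟨le_rfl, rfl⟩

theorem e₀_mem_ray : e₀ ∈ ray := ⟨zero_le_one, rfl⟩

theorem dist_zero_e₀ : dist (0 : Plane) e₀ = 1 := by simp [EuclideanSpace.dist_eq]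

theorem dist_zero_e₁ : dist (0 : Plane) e₁ = 1 := by simp [EuclideanSpace.dist_eq]

theorem dist_e₁_e₀_sq : dist e₁ e₀ ^ 2 = 2 := by norm_num [dist_sq]

section Ray

variable {r s t : Plane}

theorem dist_sq_of_mem_ray (hr : r ∈ ray) (hs : s ∈ ray) : dist r s ^ 2 = (r 0 - s 0) ^ 2 := by
  rw [dist_sq, hr.2, hs.2]; ring

theorem dist_e₁_sq_of_mem_ray (hr : r ∈ ray) : dist r e₁ ^ 2 = r 0 ^ 2 + 1 := by
  rw [dist_sq, hr.2]; simp

theorem one_le_dist_e₁ (hr : r ∈ ray) : 1 ≤ dist r e₁ := by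
  nlinarith [dist_e₁_sq_of_mem_ray hr, dist_nonneg (x := r) (y := e₁), sq_nonneg (r 0)]

theorem eq_zero_of_dist_e₁_eq_one (hr : r ∈ ray) (h : dist r e₁ = 1) : r = 0 := by
  have h0 : r 0 = 0 := by nlinarith [dist_e₁_sq_of_mem_ray hr]
  exact ext (by simpa using h0) (by simpa using hr.2)

theorem eq_e₀_of_dist_zero_eq_one (hr : r ∈ ray) (h : dist r 0 = 1) : r = e₀ := by
  have hd := dist_sq_of_mem_ray hr zero_mem_ray
  rw [h, PiLp.zero_apply, sub_zero] at hd
  have h0 : r 0 = 1 := by nlinarith [hr.1]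
  exact ext (by simpa using h0) (by simpa using hr.2)

theorem dist_sq_ne_two (hr : r ∈ ray) (hs : s ∈ ray) (ht : t ∈ ray) (hrs : dist r s = 1)
    (hst : dist s t = 1) : dist r t ^ 2 ≠ 2 := by
  have h₁ := dist_sq_of_mem_ray hr hs
  have h₂ := dist_sq_of_mem_ray hs ht
  rw [hrs] at h₁
  rw [hst] at h₂
  rw [dist_sq_of_mem_ray hr ht]
  nlinarith [sq_nonneg ((r 0 - s 0) * (s 0 - t 0))]

end Ray

section Isometry

variable {f : Plane → Plane}

theorem mapsTo_ray (hf : Isometry f) (hL : MapsTo f (ray ∪ {e₁}) (ray ∪ {e₁})) :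
    MapsTo f ray ray := by
  intro p hp
  refine (hL (Or.inl hp)).resolve_right fun hfp => ?_
  set p' : Plane := WithLp.toLp 2 ![p 0 + 1 / 2, 0]
  have hp' : p' ∈ ray := ⟨by simp only [p', Matrix.cons_val_zero]; linarith [hp.1], rfl⟩
  have hd : dist p' p ^ 2 = 1 / 4 := by rw [dist_sq_of_mem_ray hp' hp]; norm_num [p']
  rcases hL (Or.inl hp') with h | h
  · have := one_le_dist_e₁ h
    rw [← mem_singleton_iff.mp hfp, hf.dist_eq] at this
    nlinarith
  · rw [hf.injective (h.trans hfp.symm), dist_self] at hd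
    norm_num at hd

theorem map_e₁ (hf : Isometry f) (hL : MapsTo f (ray ∪ {e₁}) (ray ∪ {e₁})) : f e₁ = e₁ := by
  have hray := mapsTo_ray hf hL
  refine (hL (Or.inr rfl)).resolve_left fun h => ?_
  refine dist_sq_ne_two h (hray zero_mem_ray) (hray e₀_mem_ray) ?_ ?_ ?_ <;>
    rw [hf.dist_eq]
  · rw [dist_comm, dist_zero_e₁]
  · exact dist_zero_e₀
  · exact dist_e₁_e₀_sq

theorem map_zero (hf : Isometry f) (hL : MapsTo f (ray ∪ {e₁}) (ray ∪ {e₁})) : f 0 = 0 :=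
  eq_zero_of_dist_e₁_eq_one (mapsTo_ray hf hL zero_mem_ray) <| by
    rw [← map_e₁ hf hL, hf.dist_eq, dist_zero_e₁]

theorem map_e₀ (hf : Isometry f) (hL : MapsTo f (ray ∪ {e₁}) (ray ∪ {e₁})) : f e₀ = e₀ :=
  eq_e₀_of_dist_zero_eq_one (mapsTo_ray hf hL e₀_mem_ray) <| by
    rw [← map_zero hf hL, hf.dist_eq, dist_comm, dist_zero_e₀]

theorem eq_id (hf : Isometry f) (hL : MapsTo f (ray ∪ {e₁}) (ray ∪ {e₁})) : f = id := by
  refine hf.eq_id_of_map_zero_of_map_basis (EuclideanSpace.basisFun (Fin 2) ℝ).toBasis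
    (map_zero hf hL) fun i => ?_
  fin_cases i <;> simp [single_eq, map_e₀ hf hL, map_e₁ hf hL]

end Isometry

end HalfLineWithPoint

/-- Claim 1: the figure `L` consisting of the closed half-line `{(x,0) : x ≥ 0}`
together with the point `(0,1)` is strongly good; in fact the only surjective
isometry mapping `L` into itself is the identity. -/
theorem halfLine_with_point_stronglyGood :
    let L : Set Plane := {p | 0 ≤ p 0 ∧ p 1 = 0} ∪ {(WithLp.toLp 2 ![0, 1] : Plane)}
    ∀ f : Plane → Plane, Isometry f → Function.Surjective f → f '' L ⊆ L →
      f = id ∧ f '' L = L := by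
  intro L f hf _ hfL
  have hid : f = id := HalfLineWithPoint.eq_id hf (mapsTo_iff_image_subset.mpr hfL)
  exact ⟨hid, by rw [hid, image_id]⟩
end

section
/- The figure M = {(x,0) ∈ ℝ² : x ≥ 0} ∪ {(x,1) ∈ ℝ² : x < 0} is strongly good; in fact, the only surjective isometry f : ℝ² → ℝ² with f(M) ⊆ M is the identity, so f(M) = M. -/
open Set Function

private lemma aux_two_halfLines (a0 a1 b0 b1 c0 c1 : ℝ)
    (haa : a0 * a0 + a1 * a1 = 1) (hbb : b0 * b0 + b1 * b1 = 1)
    (hab : a0 * b0 + a1 * b1 = 0)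
    (H0 : ∀ t : ℝ, 0 ≤ t →
      (0 ≤ t * a0 + c0 ∧ t * a1 + c1 = 0) ∨ (t * a0 + c0 < 0 ∧ t * a1 + c1 = 1))
    (H1 : ∀ t : ℝ, t < 0 →
      (0 ≤ t * a0 + b0 + c0 ∧ t * a1 + b1 + c1 = 0) ∨
      (t * a0 + b0 + c0 < 0 ∧ t * a1 + b1 + c1 = 1)) :
    a0 = 1 ∧ a1 = 0 ∧ b0 = 0 ∧ b1 = 1 ∧ c0 = 0 ∧ c1 = 0 := by
  have ha1 : a1 = 0 := by
    have h0 := H0 0 le_rfl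
    have h1 := H0 1 zero_le_one
    have h2 := H0 2 (by norm_num)
    rcases h0 with ⟨_, h0⟩ | ⟨_, h0⟩ <;> rcases h1 with ⟨_, h1⟩ | ⟨_, h1⟩ <;>
      rcases h2 with ⟨_, h2⟩ | ⟨_, h2⟩ <;> linarith
  subst ha1
  have ha0 : a0 = 1 ∨ a0 = -1 := by
    have h : (a0 - 1) * (a0 + 1) = 0 := by nlinarith
    rcases mul_eq_zero.1 h with h | h
    · left; linarith
    · right; linarith
  have hb0 : b0 = 0 := by
    rcases ha0 with h | h <;> subst h <;> linarith
  subst hb0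
  have hb1 : b1 = 1 ∨ b1 = -1 := by
    have h : (b1 - 1) * (b1 + 1) = 0 := by nlinarith
    rcases mul_eq_zero.1 h with h | h
    · left; linarith
    · right; linarith
  have hA : a0 = 1 := by
    rcases ha0 with h | h
    · exact h
    exfalso
    subst h
    rcases H0 0 le_rfl with ⟨hx, hy⟩ | ⟨hx, hy⟩
    · rcases H0 (c0 + 1) (by linarith) with ⟨h1, h2⟩ | ⟨h1, h2⟩ <;> linarith
    · rcases hb1 with hB | hB <;> subst hB
      · rcases H1 (-1) (by norm_num) with ⟨h1, h2⟩ | ⟨h1, h2⟩ <;> linarith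
      · rcases H1 (c0 / 2) (by linarith) with ⟨h1, h2⟩ | ⟨h1, h2⟩ <;> linarith
  subst hA
  have hc : c1 = 0 ∧ 0 ≤ c0 := by
    rcases H0 0 le_rfl with ⟨h1, h2⟩ | ⟨h1, h2⟩
    · exact ⟨by linarith, by linarith⟩
    exfalso
    rcases H0 (-c0) (by linarith) with ⟨h3, h4⟩ | ⟨h3, h4⟩ <;> linarith
  obtain ⟨hc1, hc0le⟩ := hc
  subst hc1
  have hB : b1 = 1 := by
    rcases hb1 with h | h
    · exact h
    exfalso
    subst h
    rcases H1 (-1) (by norm_num) with ⟨h1, h2⟩ | ⟨h1, h2⟩ <;> linarith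
  subst hB
  have hc0 : c0 = 0 := by
    by_contra hne
    have hpos : 0 < c0 := lt_of_le_of_ne hc0le (Ne.symm hne)
    rcases H1 (-c0 / 2) (by linarith) with ⟨h1, h2⟩ | ⟨h1, h2⟩ <;> linarith
  exact ⟨rfl, rfl, rfl, rfl, hc0, rfl⟩

/-- Claim 2: the figure `M = {(x,0) : x ≥ 0} ∪ {(x,1) : x < 0}` is strongly good;
in fact the only surjective isometry mapping `M` into itself is the identity. -/
theorem two_halfLines_stronglyGood :
    let M : Set Plane := {p | 0 ≤ p 0 ∧ p 1 = 0} ∪ {p | p 0 < 0 ∧ p 1 = 1}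
    ∀ f : Plane → Plane, Isometry f → Function.Surjective f → f '' M ⊆ M →
      f = id ∧ f '' M = M := by
  intro M f hf hsurj hsub
  suffices hid : f = id by
    exact ⟨hid, by rw [hid, Set.image_id]⟩
  -- f is an affine isometry (Mazur–Ulam)
  set e : Plane ≃ᵢ Plane := ⟨Equiv.ofBijective f ⟨hf.injective, hsurj⟩, hf⟩ with he
  set g := e.toRealAffineIsometryEquiv with hg
  have hgf : ∀ p, g p = f p := fun p => by
    rw [hg, IsometryEquiv.coeFn_toRealAffineIsometryEquiv]; rfl
  set L := g.linearIsometryEquiv with hL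
  have key : ∀ p : Plane, f p = L p + f 0 := by
    intro p
    have h := g.map_vadd (0 : Plane) p
    simp only [vadd_eq_add, add_zero, hgf] at h
    exact h
  set E0 : Plane := EuclideanSpace.single 0 1 with hE0
  set E1 : Plane := EuclideanSpace.single 1 1 with hE1
  have decomp : ∀ p : Plane, p = p 0 • E0 + p 1 • E1 := by
    intro p
    ext i
    fin_cases i <;> simp [hE0, hE1, EuclideanSpace.single_apply]
  set a : Plane := L E0 with ha
  set b : Plane := L E1 with hb
  set c : Plane := f 0 with hc
  have hinner : ∀ x y : Plane, (inner ℝ x y : ℝ) = x 0 * y 0 + x 1 * y 1 := by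
    intro x y
    simp [PiLp.inner_apply, Fin.sum_univ_two, RCLike.inner_apply]
    ring
  have haa : a 0 * a 0 + a 1 * a 1 = 1 := by
    have h := L.inner_map_map E0 E0
    rw [hinner, hinner, ← ha] at h
    rw [h]; simp [hE0, EuclideanSpace.single_apply]
  have hbb : b 0 * b 0 + b 1 * b 1 = 1 := by
    have h := L.inner_map_map E1 E1
    rw [hinner, hinner, ← hb] at h
    rw [h]; simp [hE1, EuclideanSpace.single_apply]
  have hab : a 0 * b 0 + a 1 * b 1 = 0 := by
    have h := L.inner_map_map E0 E1
    rw [hinner, hinner, ← ha, ← hb] at h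
    rw [h]; simp [hE0, hE1, EuclideanSpace.single_apply]
  -- component formula
  have hfc : ∀ (x y : ℝ) (i : Fin 2),
      f (x • E0 + y • E1) i = x * a i + y * b i + c i := by
    intro x y i
    have h := key (x • E0 + y • E1)
    rw [map_add, map_smul, map_smul, ← ha, ← hb] at h
    rw [h]
    simp
  have hpt : ∀ (x y : ℝ), (x • E0 + y • E1 : Plane) 0 = x ∧ (x • E0 + y • E1 : Plane) 1 = y := by
    intro x y
    constructor <;> simp [hE0, hE1, EuclideanSpace.single_apply]
  -- membership conditions
  have H0 : ∀ t : ℝ, 0 ≤ t →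
      (0 ≤ t * a 0 + c 0 ∧ t * a 1 + c 1 = 0) ∨
      (t * a 0 + c 0 < 0 ∧ t * a 1 + c 1 = 1) := by
    intro t ht
    have hmem : (t • E0 + (0:ℝ) • E1 : Plane) ∈ M := by
      left
      exact ⟨by rw [(hpt t 0).1]; exact ht, (hpt t 0).2⟩
    have h := hsub ⟨_, hmem, rfl⟩
    rcases h with ⟨h1, h2⟩ | ⟨h1, h2⟩
    · left; rw [hfc] at h1 h2; constructor <;> linarith
    · right; rw [hfc] at h1 h2; constructor <;> linarith
  have H1 : ∀ t : ℝ, t < 0 →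
      (0 ≤ t * a 0 + b 0 + c 0 ∧ t * a 1 + b 1 + c 1 = 0) ∨
      (t * a 0 + b 0 + c 0 < 0 ∧ t * a 1 + b 1 + c 1 = 1) := by
    intro t ht
    have hmem : (t • E0 + (1:ℝ) • E1 : Plane) ∈ M := by
      right
      exact ⟨by rw [(hpt t 1).1]; exact ht, (hpt t 1).2⟩
    have h := hsub ⟨_, hmem, rfl⟩
    rcases h with ⟨h1, h2⟩ | ⟨h1, h2⟩
    · left; rw [hfc] at h1 h2; constructor <;> linarith
    · right; rw [hfc] at h1 h2; constructor <;> linarith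
  obtain ⟨hA0, hA1, hB0, hB1, hC0, hC1⟩ :=
    aux_two_halfLines (a 0) (a 1) (b 0) (b 1) (c 0) (c 1) haa hbb hab H0 H1
  -- conclude f = id
  funext p
  have hfp : f p = p 0 • a + p 1 • b + c := by
    rw [key p]
    congr 1
    conv_lhs => rw [decomp p]
    rw [map_add, map_smul, map_smul, ← ha, ← hb]
  have : ∀ i : Fin 2, f p i = p i := by
    intro i
    have h : f p i = _ := congrArg (fun v : Plane => v i) hfp
    rw [h]
    fin_cases i <;>
      simp [hA0, hA1, hB0, hB1, hC0, hC1]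
  ext i
  exact this i
end

section
/- Let G = {(x,0) ∈ ℝ² : x ∈ ℝ} ∪ {(x,1) ∈ ℝ² : x ≥ 0} and V = {(x,0) ∈ ℝ² : x ∈ ℝ} ∪ {(x,1) ∈ ℝ² : x > 0}. Then V ≤ G and G ≤ V (via the translation (x,y) ↦ (x+1,y)), but there is no surjective isometry f : ℝ² → ℝ² with f(G) = V. Hence G is not a good set, even though G is a union of two strongly good sets. -/
/-!
`G` is closed, while `V` is not: `(t, 1) ∈ V` tends to `(0, 1) ∉ V` as `t → 0⁺`. Surjective
isometries of the plane are homeomorphisms, so they preserve closedness and cannot carry `G`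
onto `V`. On the other hand `V ⊆ G`, and the translation by `(1, 0)` maps `G` into `V`.
-/

open Set Function

open Filter Topology

theorem GeomEq.isClosed {S T : Set Plane} (h : GeomEq S T) (hS : IsClosed S) : IsClosed T := by
  obtain ⟨f, hf, -, rfl⟩ := h
  exact hf.isClosedEmbedding.isClosedMap S hS

theorem geomLe_of_subset {S T : Set Plane} (h : S ⊆ T) : GeomLe S T :=
  ⟨id, isometry_id, surjective_id, by rwa [image_id]⟩

theorem geomLe_of_image_add_subset {S T : Set Plane} (v : Plane) (h : (· + v) '' S ⊆ T) :
    GeomLe S T :=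
  ⟨(· + v), isometry_add_right v, fun y => ⟨y - v, sub_add_cancel y v⟩, h⟩

theorem not_isGood_of_not_geomEq {A B : Set Plane} (hAB : GeomLe A B) (hBA : GeomLe B A)
    (h : ¬ GeomEq A B) : ¬ IsGood A :=
  fun hA => h (hA B hAB hBA)

theorem isClosed_line_union_closed_ray (a : ℝ) :
    IsClosed ({p : Plane | p 1 = 0} ∪ {p | 0 ≤ p 0 ∧ p 1 = a}) :=
  (isClosed_eq (by fun_prop) continuous_const).union
    ((isClosed_le continuous_const (by fun_prop)).and (isClosed_eq (by fun_prop) continuous_const))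

theorem mem_closure_open_ray (a : ℝ) :
    (!₂[0, a] : Plane) ∈ closure {p : Plane | 0 < p 0 ∧ p 1 = a} := by
  have hpath : Tendsto (fun t : ℝ => (!₂[t, a] : Plane)) (𝓝[>] 0) (𝓝 !₂[0, a]) :=
    ((show Continuous fun t : ℝ => (!₂[t, a] : Plane) by fun_prop).tendsto 0).mono_left
      nhdsWithin_le_nhds
  refine mem_closure_of_tendsto hpath ?_
  filter_upwards [self_mem_nhdsWithin] with t (ht : 0 < t)
  simpa using ht

theorem not_isClosed_line_union_open_ray {a : ℝ} (ha : a ≠ 0) :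
    ¬ IsClosed ({p : Plane | p 1 = 0} ∪ {p | 0 < p 0 ∧ p 1 = a}) := by
  intro hclosed
  have hmem := hclosed.closure_subset_iff.mpr subset_union_right (mem_closure_open_ray a)
  rcases hmem with h | ⟨h, -⟩ <;> simp_all

/-- Example 1.6: for `G = {(x,0) : x ∈ ℝ} ∪ {(x,1) : x ≥ 0}` and
`V = {(x,0) : x ∈ ℝ} ∪ {(x,1) : x > 0}` we have `V ≤ G` and `G ≤ V`
(via the translation `(x,y) ↦ (x+1,y)`), but `G` is not geometrically equal to `V`;
hence `G` is not a good set. -/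
theorem union_not_good :
    let G : Set Plane := {p | p 1 = 0} ∪ {p | 0 ≤ p 0 ∧ p 1 = 1}
    let V : Set Plane := {p | p 1 = 0} ∪ {p | 0 < p 0 ∧ p 1 = 1}
    GeomLe V G ∧ GeomLe G V ∧ ¬ GeomEq G V ∧ ¬ IsGood G := by
  intro G V
  have hVG : GeomLe V G :=
    geomLe_of_subset <| union_subset_union_right _ fun p ⟨h0, h1⟩ => ⟨h0.le, h1⟩
  have hGV : GeomLe G V := by
    refine geomLe_of_image_add_subset !₂[1, 0] ?_
    rintro _ ⟨p, hp | ⟨h0, h1⟩, rfl⟩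
    · exact Or.inl (by simpa using hp)
    · exact Or.inr ⟨by simpa using add_pos_of_nonneg_of_pos h0 one_pos, by simpa using h1⟩
  have hne : ¬ GeomEq G V := fun h =>
    not_isClosed_line_union_open_ray one_ne_zero (h.isClosed (isClosed_line_union_closed_ray 1))
  exact ⟨hVG, hGV, hne, not_isGood_of_not_geomEq hGV hVG hne⟩
end

section
/- Let A ⊆ ℝ, let a ∈ A, and suppose there is a surjective isometry f : ℝ → ℝ such that f(A) = A \ {a}. Then A is not a good set: there exists B ⊆ ℝ with A ≤ B and B ≤ A but no surjective isometry g : ℝ → ℝ with g(A) = B. -/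
open Set Function

/-- Geometric equality on the real line: some surjective isometry maps `S₁` onto `S₂`. -/
def GeomEqR (S₁ S₂ : Set ℝ) : Prop :=
  ∃ f : ℝ → ℝ, Isometry f ∧ Function.Surjective f ∧ f '' S₁ = S₂

/-- `S₁` is equal to or smaller than `S₂`: some surjective isometry maps `S₁` into `S₂`. -/
def GeomLeR (S₁ S₂ : Set ℝ) : Prop :=
  ∃ f : ℝ → ℝ, Isometry f ∧ Function.Surjective f ∧ f '' S₁ ⊆ S₂

/-- A figure is good if `A ≤ B` and `B ≤ A` imply `A ≈ B` for every figure `B`. -/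
def IsGoodR (A : Set ℝ) : Prop :=
  ∀ B : Set ℝ, GeomLeR A B → GeomLeR B A → GeomEqR A B

/-
An isometry of ℝ is a translation or a reflection, and a reflection is an involution,
which cannot map `A` onto `A \ {a}` with `a ∈ A`: it would have to send `f a ∈ A` back to `a`.
So `f` is a translation, and `B = A \ {f a}` works: `f ∘ f` maps `A` into `B` and `B ⊆ A`.
If a surjective isometry `g` mapped `A` onto `B`, it would be a translation as well, hence commute
with `f`, and comparing `g (f A) = A \ {f a, g a}` with `f (g A) ⊆ A \ {a}` forces `g a = a`,
i.e. `g = id`, which is absurd since `f a ∈ A \ B`.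
-/

lemma isometry_real_eq_add_or_eq_sub {f : ℝ → ℝ} (hf : Isometry f) :
    (∀ x, f x = x + f 0) ∨ (∀ x, f x = f 0 - x) := by
  have hsq : ∀ x y : ℝ, (f x - f y) ^ 2 = (x - y) ^ 2 := fun x y => by
    rw [← sq_abs, ← Real.dist_eq, hf.dist_eq, Real.dist_eq, sq_abs]
  have h1 : (f 1 - f 0 - 1) * (f 1 - f 0 + 1) = 0 := by nlinarith [hsq 1 0]
  rcases mul_eq_zero.mp h1 with h | h
  · exact Or.inl fun x => by nlinarith [hsq x 0, hsq x 1]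
  · exact Or.inr fun x => by nlinarith [hsq x 0, hsq x 1]

section

variable {α : Type*} {f g : α → α} {A : Set α} {a : α}

lemma Function.Involutive.image_ne_diff_singleton (hf : Involutive f) (ha : a ∈ A) :
    f '' A ≠ A \ {a} := by
  intro hfA
  have hfa : f a ∈ A := (hfA ▸ mem_image_of_mem f ha : f a ∈ A \ {a}).1
  have : a ∈ A \ {a} := hfA ▸ ⟨f a, hfa, hf a⟩
  exact this.2 rfl

lemma image_image_subset_diff_singleton (hf : Injective f) (hfA : f '' A = A \ {a}) :
    f '' (f '' A) ⊆ A \ {f a} := by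
  rw [hfA, image_sdiff hf, image_singleton, hfA]
  exact sdiff_subset_sdiff_left sdiff_subset

lemma Function.Commute.apply_eq_self_of_image_eq_diff_singleton (hfg : Function.Commute f g)
    (hg : Injective g) (ha : a ∈ A) (hfA : f '' A = A \ {a}) (hgA : g '' A = A \ {f a}) :
    g a = a := by
  by_contra hga
  have hfa : f a ≠ a := (hfA ▸ mem_image_of_mem f ha : f a ∈ A \ {a}).2
  have hmem : a ∈ g '' (f '' A) := by
    rw [hfA, image_sdiff hg, image_singleton, hgA]
    exact ⟨⟨ha, Ne.symm hfa⟩, Ne.symm hga⟩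
  rw [image_comm fun x => (hfg x).symm] at hmem
  have : a ∈ A \ {a} := hfA ▸ image_mono (hgA ▸ sdiff_subset) hmem
  exact this.2 rfl

end

lemma eq_add_of_isometry_of_image_eq_diff_singleton {f : ℝ → ℝ} {A : Set ℝ} {a : ℝ}
    (hf : Isometry f) (ha : a ∈ A) (hfA : f '' A = A \ {a}) : ∀ x, f x = x + f 0 := by
  refine (isometry_real_eq_add_or_eq_sub hf).resolve_right fun hsub => ?_
  refine Involutive.image_ne_diff_singleton (fun x => ?_) ha hfA
  rw [hsub (f x), hsub x]
  ring

/-- Appendix lemma: if some surjective isometry of `ℝ` maps `A` onto `A \ {a}`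
with `a ∈ A`, then `A` is not a good set. -/
theorem not_good_of_geomEq_diff_singleton (A : Set ℝ) (a : ℝ) (ha : a ∈ A)
    (f : ℝ → ℝ) (hf : Isometry f) (hfs : Function.Surjective f)
    (hfA : f '' A = A \ {a}) :
    ∃ B : Set ℝ, GeomLeR A B ∧ GeomLeR B A ∧
      ¬ ∃ g : ℝ → ℝ, Isometry g ∧ Function.Surjective g ∧ g '' A = B := by
  refine ⟨A \ {f a}, ⟨f ∘ f, hf.comp hf, hfs.comp hfs, ?_⟩, ⟨id, isometry_id, surjective_id, ?_⟩, ?_⟩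
  · rw [image_comp]
    exact image_image_subset_diff_singleton hf.injective hfA
  · rw [image_id]
    exact sdiff_subset
  rintro ⟨g, hg, -, hgA⟩
  have hfa : f a ∈ A := (hfA ▸ mem_image_of_mem f ha : f a ∈ A \ {a}).1
  have hf_add := eq_add_of_isometry_of_image_eq_diff_singleton hf ha hfA
  have hg_add := eq_add_of_isometry_of_image_eq_diff_singleton hg hfa hgA
  have hfg : Function.Commute f g := fun x => by rw [hf_add (g x), hg_add x, hg_add (f x), hf_add x]; ring
  have hga := hfg.apply_eq_self_of_image_eq_diff_singleton hg.injective ha hfA hgA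
  have hg_id : ∀ x, g x = x := fun x => by linarith [hg_add x, hg_add a]
  have : f a ∈ A \ {f a} := hgA ▸ ⟨f a, hfa, hg_id (f a)⟩
  exact this.2 rfl
end

section
/- Every good subset A of the real line ℝ is strongly good: if for every B ⊆ ℝ, A ≤ B and B ≤ A imply A ≈ B, then every surjective isometry T : ℝ → ℝ with T(A) ⊆ A satisfies T(A) = A. -/
/-!
If an isometry `T` maps `A` onto a proper subset, pick `a ∈ A \ T(A)`; then
`A ≤ A \ {a}` and, by goodness, some isometry maps `A` onto `A \ {a}`. A reflection is an involution
and cannot map a set onto a proper subset, so `A + d = A \ {a}` for some `d`. Then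
`A + 2d ⊆ A \ {a + d}` and goodness again gives `A + e = A \ {a + d}`. Writing `a = x + e` with
`x ∈ A` yields `a + d = (x + d) + e ∈ A + e`, a contradiction.
-/

open Set Function

lemma Function.Involutive.image_eq_of_image_subset {α : Type*} {g : α → α} (hg : g.Involutive)
    {A : Set α} (h : g '' A ⊆ A) : g '' A = A :=
  h.antisymm fun x hx => ⟨g x, h ⟨x, hx, rfl⟩, hg x⟩

lemma geomLeR_of_subset {A B : Set ℝ} (h : A ⊆ B) : GeomLeR A B :=
  ⟨id, isometry_id, surjective_id, by rwa [image_id]⟩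

lemma geomLeR_of_add_image_subset {A B : Set ℝ} (d : ℝ) (h : (· + d) '' A ⊆ B) : GeomLeR A B :=
  ⟨(· + d), (IsometryEquiv.addRight d).isometry, add_right_surjective d, h⟩

lemma IsGoodR.exists_add_image_eq_diff_singleton {A : Set ℝ} (hA : IsGoodR A) {a : ℝ}
    (ha : a ∈ A) (hle : GeomLeR A (A \ {a})) : ∃ d, (· + d) '' A = A \ {a} := by
  obtain ⟨g, hg, -, hgA⟩ := hA _ hle (geomLeR_of_subset sdiff_subset)
  rcases isometry_real_eq_add_or_eq_sub hg with htrans | hrefl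
  · exact ⟨g 0, by rw [← hgA]; exact image_congr fun x _ => (htrans x).symm⟩
  · have hinv : g.Involutive := fun x => by rw [hrefl (g x), hrefl x]; ring
    have hself : A = A \ {a} :=
      (hinv.image_eq_of_image_subset (hgA.trans_subset sdiff_subset)).symm.trans hgA
    rw [hself] at ha
    exact absurd rfl ha.2

lemma IsGoodR.not_geomLeR_diff_singleton {A : Set ℝ} (hA : IsGoodR A) {a : ℝ} (ha : a ∈ A) :
    ¬ GeomLeR A (A \ {a}) := by
  intro hle
  obtain ⟨d, hd⟩ := hA.exists_add_image_eq_diff_singleton ha hle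
  have hshift : ∀ x ∈ A, x + d ∈ A \ {a} := fun x hx => hd ▸ mem_image_of_mem (· + d) hx
  have had : a + d ∈ A := (hshift a ha).1
  have hle' : GeomLeR A (A \ {a + d}) := geomLeR_of_add_image_subset (d + d) <| by
    rintro _ ⟨x, hx, rfl⟩
    obtain ⟨hxd, hxa⟩ := hshift x hx
    refine ⟨by simpa only [add_assoc] using (hshift _ hxd).1, ?_⟩
    simpa [← add_assoc] using hxa
  obtain ⟨e, he⟩ := hA.exists_add_image_eq_diff_singleton had hle'
  obtain ⟨x, hx, hxe⟩ : a ∈ (· + e) '' A :=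
    he ▸ ⟨ha, fun h => (hshift a ha).2 (mem_singleton_iff.mp h).symm⟩
  have hxde : x + d + e ∈ A \ {a + d} := he ▸ mem_image_of_mem (· + e) (hshift x hx).1
  exact hxde.2 (by simp only at hxe; simp only [mem_singleton_iff]; linarith)

/-- Appendix proposition: every good subset of the real line is strongly good. -/
theorem stronglyGood_of_good (A : Set ℝ) (hA : IsGoodR A) :
    ∀ T : ℝ → ℝ, Isometry T → Function.Surjective T → T '' A ⊆ A → T '' A = A := by
  intro T hT hTs hTA
  by_contra hne
  obtain ⟨a, haA, haT⟩ : ∃ a ∈ A, a ∉ T '' A := not_subset.mp fun h => hne (hTA.antisymm h)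
  exact hA.not_geomLeR_diff_singleton haA
    ⟨T, hT, hTs, fun y hy => ⟨hTA hy, fun h => haT (mem_singleton_iff.mp h ▸ hy)⟩⟩
end
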